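/- Let m_α > 0, m_{2α} ≥ 0, set ρ = (m_α + 2 m_{2α})/2, and define γ(u) = Γ(u + m_α/2) Γ(u/2 + ρ/2) / ( Γ(u + 1) Γ(u/2 + m_α/4) ) for u ≥ 0 and q_t(r) = γ( ρ r / √(t² + r²) ) · t · r · (t² + r²)^{−5/4} · exp( −ρ r − ρ √(t² + r²) ) for t, r > 0. Then for every ξ > 0 and every ε ∈ (0,1/2) there exist constants C > 0 and t₀ > 0 such that for all t ≥ t₀, all r ∈ [t^{2−ε}, t^{2+ε}] and all s > 0 with |r − s| ≤ ξ: | q_t(s)/q_t(r) − e^{2ρ(r − s)} | ≤ C t^{−2+4ε}. -/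

import Mathlib

/-
Write `q_t(x) = exp (ℓ_t(x) - 2ρx)` with
`ℓ_t(x) = log γ(ρx/√(t²+x²)) + log t + log x - (5/4) log (t²+x²) - ρ(√(t²+x²) - x)`.
Then `q_t(s)/q_t(r) = e^{ℓ_t(s) - ℓ_t(r)} e^{2ρ(r-s)}` exactly, and it suffices to show
`ℓ_t(s) - ℓ_t(r) = O(ξ/r + t²/r²)` for `|s - r| ≤ ξ`, since both terms are `O(t^{-2+2ε})` once
`r ≥ t^{2-ε}`. For `x ≥ t` the argument of `γ` lies in `[ρ/2, ρ]`, where `log γ` is Lipschitz, and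
it is within `ρt²/(2x²)` of `ρ`; `log x` and `log (t²+x²)` move by `O(ξ/r)`; and
`√(t²+x²) - x = t²/(√(t²+x²) + x)` has derivative of size `O(t²/x²)`.
-/

open Real

/-- The factor `γ(u)` appearing in the large-time asymptotics of the Poisson kernel on a rank
one non-compact symmetric space with root multiplicities `mα`, `m2α` and `ρ = (mα+2m2α)/2`. -/
noncomputable def gammaFactor (mα ρ u : ℝ) : ℝ :=
  Real.Gamma (u + mα/2) * Real.Gamma (u/2 + ρ/2) /
    (Real.Gamma (u + 1) * Real.Gamma (u/2 + mα/4))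

/-- The large-time asymptotic profile of the Poisson kernel at distance `r`. -/
noncomputable def qProfile (mα ρ t r : ℝ) : ℝ :=
  gammaFactor mα ρ (ρ * r / Real.sqrt (t^2 + r^2)) * t * r * (t^2 + r^2) ^ (-(5/4 : ℝ)) *
    Real.exp (-ρ * r - ρ * Real.sqrt (t^2 + r^2))

open Set

theorem gammaFactor_pos {mα ρ u : ℝ} (hmα : 0 ≤ mα) (hρ : 0 ≤ ρ) (hu : 0 < u) :
    0 < gammaFactor mα ρ u := by
  unfold gammaFactor
  apply div_pos <;> apply mul_pos <;> apply Gamma_pos_of_pos <;> positivity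

theorem Real.contDiffAt_Gamma_of_pos {x : ℝ} (hx : 0 < x) {n : WithTop ℕ∞} :
    ContDiffAt ℝ n Gamma x := by
  have hopen : IsOpen {z : ℂ | 0 < z.re} := isOpen_lt continuous_const Complex.continuous_re
  have hdiff : DifferentiableOn ℂ Complex.Gamma {z : ℂ | 0 < z.re} := fun z hz =>
    (Complex.differentiableAt_Gamma z fun m hm => by
      simp only [hm, mem_ofPred_eq, Complex.neg_re, Complex.natCast_re] at hz
      linarith [(Nat.cast_nonneg m : (0:ℝ) ≤ m)]).differentiableWithinAt
  have hC : ContDiffAt ℂ n Complex.Gamma x :=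
    (hdiff.contDiffOn hopen).contDiffAt (hopen.mem_nhds (by simpa using hx))
  simpa only [Complex.Gamma_ofReal, Complex.ofReal_re] using hC.real_of_complex

theorem contDiffOn_log_gammaFactor {mα ρ : ℝ} (hmα : 0 ≤ mα) (hρ : 0 ≤ ρ) {n : WithTop ℕ∞} :
    ContDiffOn ℝ n (fun u => log (gammaFactor mα ρ u)) (Ioi 0) := by
  intro u (hu : 0 < u)
  refine ContDiffAt.contDiffWithinAt (ContDiffAt.log ?_ (gammaFactor_pos hmα hρ hu).ne')
  have hΓ {g : ℝ → ℝ} (hg : ContDiffAt ℝ n g u) (hgu : 0 < g u) :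
      ContDiffAt ℝ n (fun v => Real.Gamma (g v)) u :=
    ContDiffAt.comp (g := Real.Gamma) u (contDiffAt_Gamma_of_pos hgu) hg
  have hden : Real.Gamma (u + 1) * Real.Gamma (u/2 + mα/4) ≠ 0 :=
    (mul_pos (Gamma_pos_of_pos (by positivity)) (Gamma_pos_of_pos (by positivity))).ne'
  unfold gammaFactor
  exact ((hΓ (by fun_prop) (by positivity)).mul (hΓ (by fun_prop) (by positivity))).div
    ((hΓ (by fun_prop) (by positivity)).mul (hΓ (by fun_prop) (by positivity))) hden

theorem exists_lipschitzOnWith_log_gammaFactor {mα ρ : ℝ} (hmα : 0 ≤ mα) (hρ : 0 < ρ) :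
    ∃ L, LipschitzOnWith L (fun u => log (gammaFactor mα ρ u)) (Icc (ρ/2) ρ) :=
  ((contDiffOn_log_gammaFactor hmα hρ.le (n := 1)).mono fun _ hu =>
    (half_pos hρ).trans_le hu.1).exists_lipschitzOnWith one_ne_zero (convex_Icc _ _) isCompact_Icc

theorem abs_log_sub_log_le {a b m : ℝ} (hm : 0 < m) (ha : m ≤ a) (hb : m ≤ b) :
    |log a - log b| ≤ |a - b| / m := by
  wlog hab : a ≤ b generalizing a b
  · rw [abs_sub_comm, abs_sub_comm a]; exact this hb ha (le_of_not_ge hab)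
  have ha0 : 0 < a := hm.trans_le ha
  rw [abs_sub_comm, abs_of_nonneg (sub_nonneg.2 (log_le_log ha0 hab)),
    abs_of_nonpos (sub_nonpos.2 hab), ← log_div (ha0.trans_le hab).ne' ha0.ne']
  calc log (b / a) ≤ b / a - 1 := log_le_sub_one_of_pos (div_pos (ha0.trans_le hab) ha0)
    _ = (b - a) / a := by field_simp
    _ ≤ -(a - b) / m := by rw [neg_sub]; gcongr

theorem self_le_sqrt_sq_add_sq (t x : ℝ) : x ≤ √(t^2 + x^2) :=
  le_sqrt_of_sq_le (by nlinarith)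

theorem sqrt_sq_add_sq_sub_self_le {x : ℝ} (t : ℝ) (hx : 0 < x) :
    √(t^2 + x^2) - x ≤ t^2 / (2*x) := by
  have hA := sq_sqrt (show 0 ≤ t^2 + x^2 by positivity)
  have hxA := self_le_sqrt_sq_add_sq t x
  rw [le_div_iff₀ (by positivity)]
  nlinarith

theorem abs_sqrt_sq_add_sq_sub_sqrt_sq_add_sq_le (t x y : ℝ) :
    |√(t^2 + x^2) - √(t^2 + y^2)| ≤ |x - y| := by
  have hA := sq_sqrt (show 0 ≤ t^2 + x^2 by positivity)
  have hB := sq_sqrt (show 0 ≤ t^2 + y^2 by positivity)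
  -- Cauchy–Schwarz: `(t² + x²)(t² + y²) - (t² + xy)² = t²(x - y)²`
  have hAB : t^2 + x*y ≤ √(t^2 + x^2) * √(t^2 + y^2) := by
    rw [← sqrt_mul (by positivity)]
    exact le_sqrt_of_sq_le (by nlinarith [sq_nonneg (t * (x - y))])
  rw [← sq_le_sq]
  nlinarith

theorem abs_sqrt_sub_self_sub_sqrt_sub_self_le {x y : ℝ} (t : ℝ) (hx : 0 < x) (hy : 0 < y) :
    |(√(t^2 + x^2) - x) - (√(t^2 + y^2) - y)| ≤ t^2 * |x - y| / (2*x*y) := by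
  set A := √(t^2 + x^2)
  set B := √(t^2 + y^2)
  have hxA : x ≤ A := self_le_sqrt_sq_add_sq t x
  have hyB : y ≤ B := self_le_sqrt_sq_add_sq t y
  have hAx0 : 0 < A + x := by linarith
  have hBy0 : 0 < B + y := by linarith
  have hAx : A - x = t^2 / (A + x) := by
    rw [eq_div_iff hAx0.ne']; nlinarith [sq_sqrt (show 0 ≤ t^2 + x^2 by positivity)]
  have hBy : B - y = t^2 / (B + y) := by
    rw [eq_div_iff hBy0.ne']; nlinarith [sq_sqrt (show 0 ≤ t^2 + y^2 by positivity)]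
  have hnum : |(B + y) - (A + x)| ≤ 2 * |x - y| := by
    have := abs_sqrt_sq_add_sq_sub_sqrt_sq_add_sq_le t x y
    rw [abs_sub_comm] at this
    calc |(B + y) - (A + x)| = |(B - A) + (y - x)| := by ring_nf
      _ ≤ |B - A| + |y - x| := abs_add_le _ _
      _ ≤ 2 * |x - y| := by rw [abs_sub_comm y]; linarith
  rw [hAx, hBy, div_sub_div _ _ hAx0.ne' hBy0.ne', mul_comm (A + x), ← mul_sub, abs_div, abs_mul,
    abs_of_nonneg (sq_nonneg t), abs_of_pos (mul_pos hAx0 hBy0)]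
  calc t^2 * |(B + y) - (A + x)| / ((A + x) * (B + y))
      ≤ t^2 * (2 * |x - y|) / ((2*x) * (2*y)) := by gcongr <;> linarith
    _ = t^2 * |x - y| / (2*x*y) := by field_simp

theorem mul_div_sqrt_mem_Icc {ρ t x : ℝ} (hρ : 0 ≤ ρ) (ht : 0 < t) (htx : t ≤ x) :
    ρ * x / √(t^2 + x^2) ∈ Icc (ρ/2) ρ := by
  have hx : 0 < x := ht.trans_le htx
  have hA : 0 < √(t^2 + x^2) := by positivity
  have hA2 : √(t^2 + x^2) ≤ 2 * x := sqrt_le_iff.2 ⟨by positivity, by nlinarith⟩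
  constructor
  · rw [le_div_iff₀ hA]; nlinarith
  · rw [div_le_iff₀ hA]; nlinarith [self_le_sqrt_sq_add_sq t x]

theorem sub_mul_div_sqrt_le {ρ x : ℝ} (t : ℝ) (hρ : 0 ≤ ρ) (hx : 0 < x) :
    ρ - ρ * x / √(t^2 + x^2) ≤ ρ * t^2 / (2*x^2) := by
  have hxA := self_le_sqrt_sq_add_sq t x
  have hA : 0 < √(t^2 + x^2) := hx.trans_le hxA
  calc ρ - ρ * x / √(t^2 + x^2) = ρ * (√(t^2 + x^2) - x) / √(t^2 + x^2) := by field_simp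
    _ ≤ ρ * (t^2 / (2*x)) / x := by
        gcongr
        exact sqrt_sq_add_sq_sub_self_le t hx
    _ = ρ * t^2 / (2*x^2) := by field_simp

noncomputable def logTiltedProfile (mα ρ t x : ℝ) : ℝ :=
  log (gammaFactor mα ρ (ρ * x / √(t^2 + x^2))) + log t + log x - 5/4 * log (t^2 + x^2)
    - ρ * (√(t^2 + x^2) - x)

theorem qProfile_eq_exp {mα ρ t x : ℝ} (hmα : 0 ≤ mα) (hρ : 0 < ρ) (ht : 0 < t) (hx : 0 < x) :
    qProfile mα ρ t x = exp (logTiltedProfile mα ρ t x - 2*ρ*x) := by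
  have hγ : 0 < gammaFactor mα ρ (ρ * x / √(t^2 + x^2)) := gammaFactor_pos hmα hρ.le (by positivity)
  have hQ : 0 < t^2 + x^2 := by positivity
  rw [logTiltedProfile, qProfile, rpow_def_of_pos hQ]
  rw [show ∀ g a b c d : ℝ, g + a + b - c * d - ρ * (√(t^2 + x^2) - x) - 2*ρ*x =
      g + a + b + d * -c + (-ρ * x - ρ * √(t^2 + x^2)) from fun _ _ _ _ _ => by ring]
  rw [exp_add, exp_add, exp_add, exp_add, exp_log hγ, exp_log ht, exp_log hx]

theorem qProfile_div_qProfile {mα ρ t r s : ℝ} (hmα : 0 ≤ mα) (hρ : 0 < ρ) (ht : 0 < t)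
    (hr : 0 < r) (hs : 0 < s) :
    qProfile mα ρ t s / qProfile mα ρ t r =
      exp (logTiltedProfile mα ρ t s - logTiltedProfile mα ρ t r) * exp (2*ρ*(r - s)) := by
  rw [qProfile_eq_exp hmα hρ ht hs, qProfile_eq_exp hmα hρ ht hr, ← exp_sub, ← exp_add]
  congr 1; ring

theorem abs_log_gammaFactor_sub_le {mα ρ t x y : ℝ} {L : NNReal} (hρ : 0 ≤ ρ)
    (hL : LipschitzOnWith L (fun u => log (gammaFactor mα ρ u)) (Icc (ρ/2) ρ))
    (ht : 0 < t) (htx : t ≤ x) (hty : t ≤ y) :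
    |log (gammaFactor mα ρ (ρ * x / √(t^2 + x^2))) - log (gammaFactor mα ρ (ρ * y / √(t^2 + y^2)))|
      ≤ L * (ρ * t^2 / (2*x^2) + ρ * t^2 / (2*y^2)) := by
  have hux := mul_div_sqrt_mem_Icc hρ ht htx
  have huy := mul_div_sqrt_mem_Icc hρ ht hty
  have hdist := hL.dist_le_mul _ hux _ huy
  rw [dist_eq, dist_eq] at hdist
  refine hdist.trans (mul_le_mul_of_nonneg_left ?_ L.2)
  have hx := sub_mul_div_sqrt_le t hρ (ht.trans_le htx)
  have hy := sub_mul_div_sqrt_le t hρ (ht.trans_le hty)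
  rw [abs_le]
  constructor <;> linarith [hux.2, huy.2]

theorem abs_log_sq_add_sq_sub_le_of_abs_sub_le {r s ξ : ℝ} (t : ℝ) (hr : 0 < r) (hξr : 2*ξ ≤ r)
    (hsr : |s - r| ≤ ξ) :
    |log (t^2 + s^2) - log (t^2 + r^2)| ≤ 10 * (ξ / r) := by
  obtain ⟨hsr₁, hsr₂⟩ := abs_le.1 hsr
  refine (abs_log_sub_log_le (by positivity : 0 < r^2/4) (by nlinarith) (by nlinarith)).trans ?_
  have hsr3 : |s + r| ≤ 5*r/2 := by
    rw [abs_le]; constructor <;> linarith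
  rw [show t^2 + s^2 - (t^2 + r^2) = (s - r) * (s + r) by ring, abs_mul, ← mul_div_assoc,
    div_le_div_iff₀ (by positivity) hr]
  nlinarith [mul_le_mul hsr hsr3 (abs_nonneg _) ((abs_nonneg _).trans hsr)]

theorem abs_sqrt_sub_self_sub_le_of_abs_sub_le {r s ξ : ℝ} (t : ℝ) (hr : 0 < r) (hξr : 2*ξ ≤ r)
    (hsr : |s - r| ≤ ξ) :
    |(√(t^2 + s^2) - s) - (√(t^2 + r^2) - r)| ≤ ξ * (t^2/r^2) := by
  have hξ : 0 ≤ ξ := (abs_nonneg _).trans hsr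
  have hs : r/2 ≤ s := by linarith [(abs_le.1 hsr).1]
  have hs0 : 0 < s := by linarith
  refine (abs_sqrt_sub_self_sub_sqrt_sub_self_le t hs0 hr).trans ?_
  rw [mul_div_assoc', div_le_div_iff₀ (by positivity) (by positivity)]
  calc t^2 * |s - r| * r^2 ≤ t^2 * ξ * r^2 := by gcongr
    _ ≤ t^2 * ξ * (2 * s * r) := by gcongr; nlinarith
    _ = ξ * t^2 * (2 * s * r) := by ring

theorem abs_logTiltedProfile_sub_le {mα ρ t r s ξ : ℝ} {L : NNReal} (hρ : 0 ≤ ρ)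
    (hL : LipschitzOnWith L (fun u => log (gammaFactor mα ρ u)) (Icc (ρ/2) ρ))
    (ht : 0 < t) (htr : 2*t ≤ r) (hξr : 2*ξ ≤ r) (hrs : |r - s| ≤ ξ) :
    |logTiltedProfile mα ρ t s - logTiltedProfile mα ρ t r|
      ≤ 15 * (ξ / r) + ρ * (3 * L + ξ) * (t^2/r^2) := by
  have hr : 0 < r := by linarith
  have hs : r/2 ≤ s := by linarith [(abs_le.1 hrs).2]
  have hs0 : 0 < s := by linarith
  have hsr : |s - r| ≤ ξ := by rwa [abs_sub_comm]
  have hts2 : t^2/s^2 ≤ 4 * (t^2/r^2) := by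
    have h4 : r^2 ≤ 4*s^2 := by nlinarith
    rw [← mul_div_assoc, div_le_div_iff₀ (by positivity) (by positivity)]
    nlinarith [mul_le_mul_of_nonneg_left h4 (sq_nonneg t)]
  have hγ : |log (gammaFactor mα ρ (ρ * s / √(t^2 + s^2)))
      - log (gammaFactor mα ρ (ρ * r / √(t^2 + r^2)))| ≤ L * (3 * ρ * (t^2/r^2)) := by
    refine (abs_log_gammaFactor_sub_le hρ hL ht (by linarith) (by linarith)).trans ?_
    gcongr
    calc ρ * t^2 / (2*s^2) + ρ * t^2 / (2*r^2) = ρ/2 * (t^2/s^2) + ρ/2 * (t^2/r^2) := by ring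
      _ ≤ ρ/2 * (4 * (t^2/r^2)) + ρ/2 * (t^2/r^2) := by gcongr
      _ ≤ 3 * ρ * (t^2/r^2) := by nlinarith [div_nonneg (sq_nonneg t) (sq_nonneg r)]
  have hlog : |log s - log r| ≤ 2 * (ξ / r) := by
    refine (abs_log_sub_log_le (half_pos hr) hs (by linarith)).trans ?_
    rw [← mul_div_assoc, div_le_div_iff₀ (half_pos hr) hr]; nlinarith
  have hlogQ := abs_log_sq_add_sq_sub_le_of_abs_sub_le t hr hξr hsr
  have hsq : |ρ * ((√(t^2 + s^2) - s) - (√(t^2 + r^2) - r))| ≤ ρ * (ξ * (t^2/r^2)) := by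
    rw [abs_mul, abs_of_nonneg hρ]
    exact mul_le_mul_of_nonneg_left (abs_sqrt_sub_self_sub_le_of_abs_sub_le t hr hξr hsr) hρ
  have hξr0 : 0 ≤ ξ / r := div_nonneg ((abs_nonneg _).trans hsr) hr.le
  obtain ⟨hγ₁, hγ₂⟩ := abs_le.1 hγ
  obtain ⟨hlog₁, hlog₂⟩ := abs_le.1 hlog
  obtain ⟨hlogQ₁, hlogQ₂⟩ := abs_le.1 hlogQ
  obtain ⟨hsq₁, hsq₂⟩ := abs_le.1 hsq
  rw [show logTiltedProfile mα ρ t s - logTiltedProfile mα ρ t r =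
      (log (gammaFactor mα ρ (ρ * s / √(t^2 + s^2)))
        - log (gammaFactor mα ρ (ρ * r / √(t^2 + r^2))))
      + (log s - log r) - 5/4 * (log (t^2 + s^2) - log (t^2 + r^2))
      - ρ * ((√(t^2 + s^2) - s) - (√(t^2 + r^2) - r)) by unfold logTiltedProfile; ring, abs_le]
  have hsplit : ρ * (3 * L + ξ) * (t^2/r^2) = L * (3 * ρ * (t^2/r^2)) + ρ * (ξ * (t^2/r^2)) := by
    ring
  constructor <;> linarith

theorem two_mul_le_of_rpow_le {t r ε : ℝ} (ht : 4 ≤ t) (hε : ε ≤ 1/2) (hr : t ^ (2 - ε) ≤ r) :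
    2 * t ≤ r := by
  have ht0 : 0 < t := by linarith
  have hsqrt : 2 ≤ t ^ (1 - ε) := calc
    (2 : ℝ) = √4 := by rw [show (4 : ℝ) = 2^2 by norm_num, sqrt_sq zero_le_two]
    _ ≤ √t := sqrt_le_sqrt ht
    _ = t ^ (1/2 : ℝ) := sqrt_eq_rpow t
    _ ≤ t ^ (1 - ε) := rpow_le_rpow_of_exponent_le (by linarith) (by linarith)
  calc 2 * t ≤ t ^ (1 - ε) * t := by gcongr
    _ = t ^ (2 - ε) := by rw [show 2 - ε = (1 - ε) + 1 by ring, rpow_add ht0, rpow_one]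
    _ ≤ r := hr

theorem inv_le_rpow_of_rpow_le {t r ε : ℝ} (ht : 1 ≤ t) (hε : 0 ≤ ε) (hr : t ^ (2 - ε) ≤ r) :
    r⁻¹ ≤ t ^ (-2 + 2*ε) := calc
  r⁻¹ ≤ (t ^ (2 - ε))⁻¹ := inv_anti₀ (by positivity) hr
  _ = t ^ (-(2 - ε)) := (rpow_neg (by linarith) _).symm
  _ ≤ t ^ (-2 + 2*ε) := rpow_le_rpow_of_exponent_le ht (by linarith)

theorem sq_div_sq_le_rpow_of_rpow_le {t r ε : ℝ} (ht : 0 < t) (hr : t ^ (2 - ε) ≤ r) :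
    t^2 / r^2 ≤ t ^ (-2 + 2*ε) := calc
  t^2 / r^2 ≤ t^2 / (t ^ (2 - ε))^2 := by gcongr
  _ = t ^ (-2 + 2*ε) := by
    rw [← rpow_natCast, ← rpow_natCast, ← rpow_mul ht.le, ← rpow_sub ht]
    congr 1; push_cast; ring

theorem abs_logTiltedProfile_sub_le_rpow {mα ρ t r s ξ ε : ℝ} {L : NNReal} (hρ : 0 ≤ ρ)
    (hL : LipschitzOnWith L (fun u => log (gammaFactor mα ρ u)) (Icc (ρ/2) ρ))
    (ht : 4 ≤ t) (hξt : ξ ≤ t) (hε : 0 ≤ ε) (hε2 : ε ≤ 1/2) (hr : t ^ (2 - ε) ≤ r)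
    (hrs : |r - s| ≤ ξ) :
    |logTiltedProfile mα ρ t s - logTiltedProfile mα ρ t r|
      ≤ (15 * ξ + ρ * (3 * L + ξ)) * t ^ (-2 + 2*ε) := by
  have htr := two_mul_le_of_rpow_le ht hε2 hr
  have hξ : 0 ≤ ξ := (abs_nonneg _).trans hrs
  refine (abs_logTiltedProfile_sub_le hρ hL (by linarith) htr (by linarith) hrs).trans ?_
  have h1 := mul_le_mul_of_nonneg_left (inv_le_rpow_of_rpow_le (by linarith) hε hr) hξ
  have h2 := mul_le_mul_of_nonneg_left (sq_div_sq_le_rpow_of_rpow_le (by linarith) hr)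
    (by positivity : 0 ≤ ρ * (3 * L + ξ))
  rw [div_eq_mul_inv]
  linarith

theorem abs_exp_mul_exp_sub_exp_le {x y : ℝ} (hx : |x| ≤ 1) :
    |exp x * exp y - exp y| ≤ 2 * |x| * exp y := by
  rw [← sub_one_mul, abs_mul, abs_of_pos (exp_pos y)]
  gcongr
  exact abs_exp_sub_one_le hx

/-- Poisson-profile quotient asymptotics in the critical region:
for `r ∈ [t^{2-ε}, t^{2+ε}]` and `|r-s| ≤ ξ`, one has
`q_t(s)/q_t(r) = e^{2ρ(r-s)} + O(t^{-2+4ε})`. -/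
theorem stmt_17
    (mα m2α : ℝ) (hmα : 0 < mα) (hm2α : 0 ≤ m2α)
    (ρ : ℝ) (hρ : ρ = (mα + 2*m2α)/2) :
    ∀ ξ : ℝ, 0 < ξ → ∀ ε : ℝ, 0 < ε → ε < 1/2 →
      ∃ C t₀ : ℝ, 0 < C ∧ 0 < t₀ ∧ ∀ t : ℝ, t₀ ≤ t →
        ∀ r : ℝ, t ^ (2-ε) ≤ r → r ≤ t ^ (2+ε) →
        ∀ s : ℝ, 0 < s → |r - s| ≤ ξ →
          |qProfile mα ρ t s / qProfile mα ρ t r - Real.exp (2*ρ*(r - s))|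
            ≤ C * t ^ (-2 + 4*ε) := by
  intro ξ hξ ε hε hε2
  have hρ0 : 0 < ρ := by rw [hρ]; positivity
  obtain ⟨L, hL⟩ := exists_lipschitzOnWith_log_gammaFactor hmα.le hρ0
  set K := 15 * ξ + ρ * (3 * L + ξ)
  refine ⟨2 * K * exp (2*ρ*ξ), max 4 (max ξ K), by positivity, by positivity, ?_⟩
  intro t ht r hr _ s hs hrs
  rw [max_le_iff, max_le_iff] at ht
  obtain ⟨ht4, htξ, htK⟩ := ht
  have ht0 : 0 < t := by linarith
  have hD := abs_logTiltedProfile_sub_le_rpow hρ0.le hL ht4 htξ hε.le hε2.le hr hrs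
  have hD1 : K * t ^ (-2 + 2*ε) ≤ 1 := calc
    K * t ^ (-2 + 2*ε) ≤ t * t ^ (-1 : ℝ) :=
      mul_le_mul htK (rpow_le_rpow_of_exponent_le (by linarith) (by linarith)) (by positivity)
        ht0.le
    _ = 1 := by rw [rpow_neg_one, mul_inv_cancel₀ ht0.ne']
  rw [qProfile_div_qProfile hmα.le hρ0 ht0 (by linarith [two_mul_le_of_rpow_le ht4 hε2.le hr]) hs]
  calc _ ≤ 2 * |logTiltedProfile mα ρ t s - logTiltedProfile mα ρ t r| * exp (2*ρ*(r - s)) :=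
        abs_exp_mul_exp_sub_exp_le (hD.trans hD1)
    _ ≤ 2 * (K * t ^ (-2 + 2*ε)) * exp (2*ρ*ξ) := by gcongr; exact (abs_le.1 hrs).2
    _ = 2 * K * exp (2*ρ*ξ) * t ^ (-2 + 2*ε) := by ring
    _ ≤ 2 * K * exp (2*ρ*ξ) * t ^ (-2 + 4*ε) := by
        gcongr <;> linarith
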